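/- Fix z ∈ [0,1]. For every reference point ỹ ∈ (0,1) and every y ∈ [0,1], the first-order (tangent-line) expansion of G₋ at ỹ is a valid lower bound: G₋(y, z) ≥ G₋(ỹ, z) + G₋′(ỹ, z)·(y − ỹ). (Linearized lower Cauchy–Schwarz constraint.) -/

import Mathlib

/-!
Write `a = √(y z)`, `b = √((1 - y)(1 - z))` and `c`, `d` for the same square roots at `ỹ`.
Then `g₋(y) = (a - b)²`, and `G₋` is this square cut off where `a ≤ b`, i.e. where `y ≤ 1 - z`.
The gap between `g₋` and its tangent line at `ỹ`, multiplied by `c d`, is the perfect square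
`(a d - b c)²`, which settles the region where `G₋ = g₋` on both sides. If `y ≤ 1 - z < ỹ`, then
`a ≤ b` and `d ≤ c`, and `(b c - a d)² ≥ c d (b - a)²` shows that the tangent line is nonpositive
at `y`. The degenerate value `z = 1`, where `d = 0`, is checked directly.
-/

noncomputable def gMinus (y z : ℝ) : ℝ :=
  y + (1 - z) * (1 - 2 * y) - 2 * Real.sqrt (z * (1 - z) * y * (1 - y))

noncomputable def gMinus' (y z : ℝ) : ℝ :=
  -1 + 2 * z - (1 - 2 * y) * Real.sqrt (z * (1 - z) / (y * (1 - y)))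

noncomputable def GMinus (y z : ℝ) : ℝ :=
  if y > 1 - z then gMinus y z else 0

noncomputable def GMinus' (y z : ℝ) : ℝ :=
  if y > 1 - z then gMinus' y z else 0

open Real Set

lemma mul_sub_sq_le_sq {a b c d : ℝ} (ha : 0 ≤ a) (hab : a ≤ b) (hd : 0 ≤ d) (hdc : d ≤ c) :
    c * d * (b - a) ^ 2 ≤ (b * c - a * d) ^ 2 := by
  have hc : c * (b - a) ≤ b * c - a * d := by nlinarith
  have hd' : d * (b - a) ≤ b * c - a * d := by nlinarith
  calc c * d * (b - a) ^ 2 = (c * (b - a)) * (d * (b - a)) := by ring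
    _ ≤ (b * c - a * d) * (b * c - a * d) :=
        mul_le_mul hc hd' (mul_nonneg hd (sub_nonneg.mpr hab)) (by nlinarith)
    _ = (b * c - a * d) ^ 2 := by ring

lemma mul_tangent_gap_eq_sq {a b c d y t z : ℝ} (ha : a ^ 2 = y * z)
    (hb : b ^ 2 = (1 - y) * (1 - z)) (hc : c ^ 2 = t * z) (hd : d ^ 2 = (1 - t) * (1 - z))
    (ht₀ : t ≠ 0) (ht₁ : t ≠ 1) :
    c * d * ((a - b) ^ 2 -
        ((c - d) ^ 2 + (2 * z - 1 - (1 - 2 * t) * (c * d) / (t * (1 - t))) * (y - t))) =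
      (a * d - b * c) ^ 2 := by
  have ht₁' : 1 - t ≠ 0 := sub_ne_zero.mpr ht₁.symm
  field_simp
  linear_combination
    ((2 * (t * (1 - t)) + (1 - 2 * t) * (y - t)) * c ^ 2 - (t * (1 - t)) * a ^ 2
      - c * d * (t * (1 - t))) * hd +
    ((2 * (t * (1 - t)) + (1 - 2 * t) * (y - t)) * (1 - t) * (1 - z)
      - (t * (1 - t)) * (1 - y) * (1 - z) - c * d * (t * (1 - t))) * hc +
    (-(t * (1 - t)) * (1 - t) * (1 - z) + c * d * (t * (1 - t))) * ha +
    (-(t * (1 - t)) * c ^ 2 + c * d * (t * (1 - t))) * hb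

section
variable {y t z : ℝ}

lemma gMinus_eq_sq (hy : y ∈ Icc 0 1) (hz : z ∈ Icc 0 1) :
    gMinus y z = (√(y * z) - √((1 - y) * (1 - z))) ^ 2 := by
  have hy' : 0 ≤ 1 - y := by linarith [hy.2]
  have hz' : 0 ≤ 1 - z := by linarith [hz.2]
  have hprod : √(z * (1 - z) * y * (1 - y)) = √(y * z) * √((1 - y) * (1 - z)) := by
    rw [← sqrt_mul (by positivity [hy.1, hz.1])]
    ring_nf
  rw [gMinus, hprod, sub_sq, sq_sqrt (by positivity [hy.1, hz.1]), sq_sqrt (by positivity)]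
  ring

lemma gMinus'_eq (ht : t ∈ Ioo 0 1) (hz : z ∈ Icc 0 1) :
    gMinus' t z =
      2 * z - 1 - (1 - 2 * t) * (√(t * z) * √((1 - t) * (1 - z))) / (t * (1 - t)) := by
  have hm : 0 < t * (1 - t) := mul_pos ht.1 (by linarith [ht.2])
  have hz' : 0 ≤ 1 - z := by linarith [hz.2]
  have hsq : t * z * ((1 - t) * (1 - z)) = z * (1 - z) / (t * (1 - t)) * (t * (1 - t)) ^ 2 := by
    field_simp
  have hsqrt : √(z * (1 - z) / (t * (1 - t))) =
      √(t * z) * √((1 - t) * (1 - z)) / (t * (1 - t)) := by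
    rw [← sqrt_mul (mul_nonneg ht.1.le hz.1), hsq,
      sqrt_mul (div_nonneg (mul_nonneg hz.1 hz') hm.le), sqrt_sq hm.le,
      mul_div_cancel_right₀ _ hm.ne']
  rw [gMinus', hsqrt]
  ring

lemma mul_gMinus_sub_tangent_eq_sq (hy : y ∈ Icc 0 1) (ht : t ∈ Ioo 0 1) (hz : z ∈ Icc 0 1) :
    √(t * z) * √((1 - t) * (1 - z)) * (gMinus y z - (gMinus t z + gMinus' t z * (y - t))) =
      (√(y * z) * √((1 - t) * (1 - z)) - √((1 - y) * (1 - z)) * √(t * z)) ^ 2 := by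
  have hy' : 0 ≤ 1 - y := by linarith [hy.2]
  have ht' : 0 ≤ 1 - t := by linarith [ht.2]
  have hz' : 0 ≤ 1 - z := by linarith [hz.2]
  rw [gMinus_eq_sq hy hz, gMinus_eq_sq (Ioo_subset_Icc_self ht) hz, gMinus'_eq ht hz]
  exact mul_tangent_gap_eq_sq (sq_sqrt (mul_nonneg hy.1 hz.1)) (sq_sqrt (mul_nonneg hy' hz'))
    (sq_sqrt (mul_nonneg ht.1.le hz.1)) (sq_sqrt (mul_nonneg ht' hz')) ht.1.ne' ht.2.ne

lemma sqrt_mul_sqrt_pos (ht : t ∈ Ioo 0 1) (hz : z ∈ Ioo 0 1) :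
    0 < √(t * z) * √((1 - t) * (1 - z)) :=
  mul_pos (sqrt_pos.mpr (mul_pos ht.1 hz.1))
    (sqrt_pos.mpr (mul_pos (by linarith [ht.2]) (by linarith [hz.2])))

lemma gMinus_tangent_le_gMinus (hy : y ∈ Icc 0 1) (ht : t ∈ Ioo 0 1) (hz : z ∈ Ioo 0 1) :
    gMinus t z + gMinus' t z * (y - t) ≤ gMinus y z := by
  have hgap := mul_gMinus_sub_tangent_eq_sq hy ht (Ioo_subset_Icc_self hz)
  have hcd := sqrt_mul_sqrt_pos ht hz
  nlinarith [sq_nonneg (√(y * z) * √((1 - t) * (1 - z)) - √((1 - y) * (1 - z)) * √(t * z))]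

lemma gMinus_tangent_nonpos (hy : y ∈ Icc 0 1) (ht : t ∈ Ioo 0 1) (hz : z ∈ Ioo 0 1)
    (hyz : y ≤ 1 - z) (htz : 1 - z < t) :
    gMinus t z + gMinus' t z * (y - t) ≤ 0 := by
  have hy' : 0 ≤ 1 - y := by linarith [hy.2]
  have hz' : 0 ≤ 1 - z := by linarith [hz.2]
  have hgap := mul_gMinus_sub_tangent_eq_sq hy ht (Ioo_subset_Icc_self hz)
  have hcd := sqrt_mul_sqrt_pos ht hz
  have hab : √(y * z) ≤ √((1 - y) * (1 - z)) := sqrt_le_sqrt (by nlinarith)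
  have hdc : √((1 - t) * (1 - z)) ≤ √(t * z) := sqrt_le_sqrt (by nlinarith)
  have hbound := mul_sub_sq_le_sq (sqrt_nonneg _) hab (sqrt_nonneg _) hdc
  rw [gMinus_eq_sq hy (Ioo_subset_Icc_self hz)] at hgap
  nlinarith

lemma GMinus_nonneg (hy : y ∈ Icc 0 1) (hz : z ∈ Icc 0 1) : 0 ≤ GMinus y z := by
  unfold GMinus
  split_ifs
  · rw [gMinus_eq_sq hy hz]
    positivity
  · rfl

lemma GMinus_tangent_le_of_z_eq_one (ht : 0 < t) :
    GMinus t 1 + GMinus' t 1 * (y - t) ≤ GMinus y 1 := by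
  simp only [GMinus, GMinus', gMinus, gMinus', sub_self, mul_zero, zero_mul, zero_div,
    sqrt_zero, ht]
  split_ifs <;> linarith

end

theorem linearized_lower_cs (z : ℝ) (hz : z ∈ Set.Icc (0 : ℝ) 1)
    (yt : ℝ) (hyt : yt ∈ Set.Ioo (0 : ℝ) 1)
    (y : ℝ) (hy : y ∈ Set.Icc (0 : ℝ) 1) :
    GMinus yt z + GMinus' yt z * (y - yt) ≤ GMinus y z := by
  by_cases htz : yt > 1 - z
  · rcases hz.2.eq_or_lt with rfl | hz1
    · exact GMinus_tangent_le_of_z_eq_one hyt.1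
    have hz' : z ∈ Ioo 0 1 := ⟨by linarith [hyt.2], hz1⟩
    rw [GMinus, GMinus', if_pos htz, if_pos htz, GMinus]
    split_ifs with hyz
    · exact gMinus_tangent_le_gMinus hy hyt hz'
    · exact gMinus_tangent_nonpos hy hyt hz' (not_lt.mp hyz) htz
  · rw [GMinus, GMinus', if_neg htz, if_neg htz, zero_add, zero_mul]
    exact GMinus_nonneg hy hz
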